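/- arXiv:1709.06112 — 4 statements merged into one kernel-verified Lean document; each statement's English description precedes it below -/
import Mathlib

section
/- Let ρ, A, B be nonzero positive semidefinite operators on a finite-dimensional complex Hilbert space H with ρ positive definite. Then tr[ρ(A+B)²]/tr(A+B) ≤ tr(ρA²)/tr(A) + tr(ρB²)/tr(B), with equality if and only if A is proportional to B. -/
open Matrix ComplexOrder

/-!
Write `a = tr A`, `b = tr B` and `C = b A - a B`. Expanding the square shows
`tr(ρA²)/a + tr(ρB²)/b - tr(ρ(A+B)²)/(a+b) = tr(ρC²) / (a b (a+b))`.
Since `C` is Hermitian, `tr(ρC²) = tr(C†ρC) ≥ 0`, and for `ρ > 0` it vanishes only when `C = 0`,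
i.e. when `A = (a/b) B`.
-/

namespace Matrix

variable {n : Type*} [Fintype n]

theorem trace_mul_smul_sub_smul_mul_smul_sub_smul {R : Type*} [CommRing R]
    (ρ A B : Matrix n n R) (a b : R) :
    (ρ * (b • A - a • B) * (b • A - a • B)).trace
      = ((ρ * A * A).trace * b + (ρ * B * B).trace * a) * (a + b)
        - (ρ * (A + B) * (A + B)).trace * (a * b) := by
  simp only [Matrix.mul_sub, Matrix.sub_mul, Matrix.mul_add, Matrix.add_mul, Matrix.mul_smul,
    Matrix.smul_mul, trace_sub, trace_add, trace_smul, smul_eq_mul]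
  ring

theorem div_trace_add_div_trace_sub_div_trace {K : Type*} [Field K] (ρ A B : Matrix n n K)
    (hA : A.trace ≠ 0) (hB : B.trace ≠ 0) (hAB : (A + B).trace ≠ 0) :
    (ρ * A * A).trace / A.trace + (ρ * B * B).trace / B.trace
        - (ρ * (A + B) * (A + B)).trace / (A + B).trace
      = (ρ * (B.trace • A - A.trace • B) * (B.trace • A - A.trace • B)).trace
        / (A.trace * B.trace * (A + B).trace) := by
  rw [trace_mul_smul_sub_smul_mul_smul_sub_smul, ← trace_add]
  field_simp

theorem IsHermitian.trace_mul_mul_self {R : Type*} [CommSemiring R] [Star R] {C : Matrix n n R}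
    (hC : C.IsHermitian) (ρ : Matrix n n R) : (ρ * C * C).trace = (Cᴴ * ρ * C).trace := by
  rw [trace_mul_cycle, hC.eq]

variable {𝕜 : Type*} [RCLike 𝕜] {ρ C : Matrix n n 𝕜}

theorem PosDef.eq_zero_of_conjTranspose_mul_mul_same_eq_zero [DecidableEq n] (hρ : ρ.PosDef)
    (h : Cᴴ * ρ * C = 0) : C = 0 := by
  refine ext_of_mulVec_single fun i => ?_
  by_contra hne
  rw [zero_mulVec] at hne
  have := hρ.dotProduct_mulVec_pos hne
  rw [star_mulVec, dotProduct_mulVec, vecMul_vecMul, ← dotProduct_mulVec, mulVec_mulVec, h,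
    zero_mulVec, dotProduct_zero] at this
  exact this.false

theorem PosSemidef.trace_mul_mul_self_nonneg (hρ : ρ.PosSemidef) (hC : C.IsHermitian) :
    0 ≤ (ρ * C * C).trace := by
  rw [hC.trace_mul_mul_self]
  exact (hρ.conjTranspose_mul_mul_same C).trace_nonneg

theorem PosDef.trace_mul_mul_self_eq_zero_iff (hρ : ρ.PosDef) (hC : C.IsHermitian) :
    (ρ * C * C).trace = 0 ↔ C = 0 := by
  classical
  rw [hC.trace_mul_mul_self, (hρ.posSemidef.conjTranspose_mul_mul_same C).trace_eq_zero_iff]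
  exact ⟨hρ.eq_zero_of_conjTranspose_mul_mul_same_eq_zero, fun h => by simp [h]⟩

theorem PosSemidef.trace_pos_of_ne_zero {A : Matrix n n 𝕜} (hA : A.PosSemidef) (h : A ≠ 0) :
    0 < A.trace :=
  hA.trace_nonneg.lt_of_ne' (hA.trace_eq_zero_iff.not.mpr h)

theorem trace_smul_eq_trace_smul_iff {A B : Matrix n n 𝕜} (hA : 0 < A.trace) (hB : 0 < B.trace) :
    B.trace • A = A.trace • B ↔ ∃ c : ℝ, 0 < c ∧ A = (c : 𝕜) • B := by
  constructor
  · intro h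
    obtain ⟨c, hc, hc_eq⟩ := RCLike.pos_iff_exists_ofReal.mp (div_pos hA hB)
    refine ⟨c, hc, ?_⟩
    rw [hc_eq, div_eq_inv_mul, mul_smul, ← h, smul_smul, inv_mul_cancel₀ hB.ne', one_smul]
  · rintro ⟨c, -, rfl⟩
    rw [trace_smul, smul_smul, smul_eq_mul, mul_comm]

end Matrix

/-- For nonzero positive semidefinite `A, B` and positive definite `ρ` on a
finite-dimensional complex Hilbert space,
`tr[ρ(A+B)²]/tr(A+B) ≤ tr(ρA²)/tr(A) + tr(ρB²)/tr(B)`,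
with equality iff `A` is proportional to `B`. -/
theorem stmt0 {d : ℕ} (ρ A B : Matrix (Fin d) (Fin d) ℂ)
    (hρ : ρ.PosDef) (hA : A.PosSemidef) (hB : B.PosSemidef)
    (hA0 : A ≠ 0) (hB0 : B ≠ 0) :
    (ρ * (A + B) * (A + B)).trace / (A + B).trace
      ≤ (ρ * A * A).trace / A.trace + (ρ * B * B).trace / B.trace ∧
    ((ρ * (A + B) * (A + B)).trace / (A + B).trace
        = (ρ * A * A).trace / A.trace + (ρ * B * B).trace / B.trace
      ↔ ∃ c : ℝ, 0 < c ∧ A = (c : ℂ) • B) := by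
  have ha := hA.trace_pos_of_ne_zero hA0
  have hb := hB.trace_pos_of_ne_zero hB0
  have hab : 0 < (A + B).trace := by rw [trace_add]; exact add_pos ha hb
  have hden : 0 < A.trace * B.trace * (A + B).trace := mul_pos (mul_pos ha hb) hab
  have hC : (B.trace • A - A.trace • B).IsHermitian :=
    (hb.le.isSelfAdjoint.smul hA.isHermitian).sub (ha.le.isSelfAdjoint.smul hB.isHermitian)
  have hgap := div_trace_add_div_trace_sub_div_trace ρ A B ha.ne' hb.ne' hab.ne'
  refine ⟨sub_nonneg.mp ?_, ?_⟩
  · rw [hgap]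
    exact div_nonneg (hρ.posSemidef.trace_mul_mul_self_nonneg hC) hden.le
  · rw [eq_comm, ← sub_eq_zero, hgap, div_eq_zero_iff, or_iff_left hden.ne',
      hρ.trace_mul_mul_self_eq_zero_iff hC, sub_eq_zero]
    exact trace_smul_eq_trace_smul_iff ha hb
end

section
/- Let Q be a positive semidefinite operator on the symmetric subspace H₊ of H⊗H (i.e., P₊QP₊ = Q where P₊ is the projector onto the symmetric subspace), and let Q̃ = tr₁(Q) + tr₂(Q) be its symmetrized marginal. Then Q̃² ≤ tr(Q̃)·Q̃ as operators, with equality (in the sense that Q̃ is proportional to a rank-one projector) if and only if Q is proportional to the second tensor power of a pure state. -/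
open Matrix Kronecker ComplexOrder BigOperators

/-- The swap operator `V` on `ℂ^d ⊗ ℂ^d`, `V(x ⊗ y) = y ⊗ x`. -/
noncomputable def swapOp (d : ℕ) : Matrix (Fin d × Fin d) (Fin d × Fin d) ℂ :=
  fun p q => if p.1 = q.2 ∧ p.2 = q.1 then 1 else 0

/-- Projector onto the symmetric subspace of `ℂ^d ⊗ ℂ^d`. -/
noncomputable def Pplus (d : ℕ) : Matrix (Fin d × Fin d) (Fin d × Fin d) ℂ :=
  (2 : ℂ)⁻¹ • (1 + swapOp d)

/-- Projector onto the antisymmetric subspace of `ℂ^d ⊗ ℂ^d`. -/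
noncomputable def Pminus (d : ℕ) : Matrix (Fin d × Fin d) (Fin d × Fin d) ℂ :=
  (2 : ℂ)⁻¹ • (1 - swapOp d)

/-- Partial trace over the first tensor factor. -/
noncomputable def ptr1 {d : ℕ} (Q : Matrix (Fin d × Fin d) (Fin d × Fin d) ℂ) :
    Matrix (Fin d) (Fin d) ℂ :=
  fun j k => ∑ i, Q (i, j) (i, k)

/-- Partial trace over the second tensor factor. -/
noncomputable def ptr2 {d : ℕ} (Q : Matrix (Fin d × Fin d) (Fin d × Fin d) ℂ) :
    Matrix (Fin d) (Fin d) ℂ :=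
  fun i j => ∑ k, Q (i, k) (j, k)

/-! Write `Q̃ = tr₁ Q + tr₂ Q`; it is positive semidefinite, being a sum of partial traces of a
positive semidefinite operator. For any positive semidefinite `M` the eigenvalues lie in
`[0, tr M]`, so `λ² ≤ (tr M) λ` for each of them, i.e. `M² ≤ (tr M) M`. Equality forces every
eigenvalue to be `0` or `tr M`, hence `M = (tr M) |v⟩⟨v|` for a unit vector `v`.

For the equality case put `E = 1 - |v⟩⟨v|`. Then `0 = tr (Q̃ E) = tr (Q (1 ⊗ E)) + tr (Q (E ⊗ 1))`,
a sum of two nonnegative terms; for positive semidefinite operators a vanishing `tr (A B)`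
forces `A B = 0`, so `Q` lives on the range of `|v⟩⟨v| ⊗ |v⟩⟨v|`, which is the line spanned by
`v ⊗ v`. -/

namespace Matrix

section Kronecker

variable {R l m n p : Type*}

lemma sub_kronecker [NonUnitalNonAssocRing R] (A₁ A₂ : Matrix l m R) (B : Matrix n p R) :
    (A₁ - A₂) ⊗ₖ B = A₁ ⊗ₖ B - A₂ ⊗ₖ B := by
  ext i j
  simp [sub_mul]

lemma kronecker_sub [NonUnitalNonAssocRing R] (A : Matrix l m R) (B₁ B₂ : Matrix n p R) :
    A ⊗ₖ (B₁ - B₂) = A ⊗ₖ B₁ - A ⊗ₖ B₂ := by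
  ext i j
  simp [mul_sub]

lemma vecMulVec_kronecker_vecMulVec [CommSemiring R] (a : l → R) (b : m → R) (c : n → R)
    (e : p → R) :
    vecMulVec a b ⊗ₖ vecMulVec c e =
      vecMulVec (fun i => a i.1 * c i.2) (fun j => b j.1 * e j.2) := by
  ext i j
  simp only [kroneckerMap_apply, vecMulVec_apply]
  ring

lemma eq_kronecker_mul_mul_kronecker [Fintype m] [Fintype n] [DecidableEq m] [DecidableEq n]
    [CommRing R] [StarRing R] {Q : Matrix (m × n) (m × n) R} {P : Matrix m m R}
    {P' : Matrix n n R} (hQ : Q.IsHermitian) (hP : P.IsHermitian) (hP' : P'.IsHermitian)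
    (h₁ : Q * ((1 - P) ⊗ₖ 1) = 0) (h₂ : Q * (1 ⊗ₖ (1 - P')) = 0) :
    Q = (P ⊗ₖ P') * Q * (P ⊗ₖ P') := by
  rw [sub_kronecker, one_kronecker_one, Matrix.mul_sub, Matrix.mul_one, sub_eq_zero] at h₁
  rw [kronecker_sub, one_kronecker_one, Matrix.mul_sub, Matrix.mul_one, sub_eq_zero] at h₂
  have hr : Q * (P ⊗ₖ P') = Q := by
    rw [← Matrix.mul_one P, ← Matrix.one_mul P', mul_kronecker_mul, ← Matrix.mul_assoc, ← h₁, ← h₂]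
  have hl : (P ⊗ₖ P') * Q = Q := by
    simpa only [conjTranspose_mul, conjTranspose_kronecker, hQ.eq, hP.eq, hP'.eq]
      using congrArg conjTranspose hr
  rw [hl, hr]

end Kronecker

section VecMulVec

variable {R n : Type*} [Fintype n] [CommSemiring R]

lemma vecMulVec_mul_mul_vecMulVec (u v : n → R) (Q : Matrix n n R) :
    vecMulVec u v * Q * vecMulVec u v = (v ⬝ᵥ Q *ᵥ u) • vecMulVec u v := by
  rw [vecMulVec_mul, vecMulVec_mul_vecMulVec, ← dotProduct_mulVec, vecMulVec_smul]

lemma smul_mul_smul_self_eq_trace_smul {P : Matrix n n R} (hP : P * P = P.trace • P) (a : R) :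
    (a • P) * (a • P) = (a • P).trace • (a • P) := by
  rw [smul_mul_smul_comm, hP, trace_smul, smul_smul, smul_smul, smul_eq_mul]
  congr 1
  ring

variable [StarRing R]

lemma star_dotProduct_mulVec_eq_trace_mul_vecMulVec (M : Matrix n n R) (x : n → R) :
    star x ⬝ᵥ M *ᵥ x = (M * vecMulVec x (star x)).trace := by
  rw [mul_vecMulVec, trace_vecMulVec, dotProduct_comm]

lemma vecMulVec_self_star_mul_self (v : n → R) :
    vecMulVec v (star v) * vecMulVec v (star v) =
      (vecMulVec v (star v)).trace • vecMulVec v (star v) := by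
  rw [vecMulVec_mul_vecMulVec, trace_vecMulVec, dotProduct_comm, vecMulVec_smul]

lemma isStarProjection_vecMulVec_self_star {v : n → R} (hv : star v ⬝ᵥ v = 1) :
    IsStarProjection (vecMulVec v (star v)) where
  isIdempotentElem := by
    rw [IsIdempotentElem, vecMulVec_mul_vecMulVec, hv, one_smul]
  isSelfAdjoint := by
    rw [IsSelfAdjoint, star_eq_conjTranspose, conjTranspose_vecMulVec, star_star]

end VecMulVec

open scoped MatrixOrder

section PosSemidef

variable {𝕜 n : Type*} [RCLike 𝕜] [Fintype n]

lemma trace_conjTranspose_mul_self_mul_conjTranspose_mul_self (C D : Matrix n n 𝕜) :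
    (Cᴴ * C * (Dᴴ * D)).trace = ((C * Dᴴ)ᴴ * (C * Dᴴ)).trace := by
  rw [conjTranspose_mul, conjTranspose_conjTranspose, ← Matrix.mul_assoc, trace_mul_comm]
  simp only [Matrix.mul_assoc]

lemma PosSemidef.trace_mul_nonneg {A B : Matrix n n 𝕜} (hA : A.PosSemidef) (hB : B.PosSemidef) :
    0 ≤ (A * B).trace := by
  classical
  obtain ⟨C, rfl⟩ := CStarAlgebra.nonneg_iff_eq_star_mul_self.mp hA.nonneg
  obtain ⟨D, rfl⟩ := CStarAlgebra.nonneg_iff_eq_star_mul_self.mp hB.nonneg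
  rw [star_eq_conjTranspose, star_eq_conjTranspose,
    trace_conjTranspose_mul_self_mul_conjTranspose_mul_self]
  exact (posSemidef_conjTranspose_mul_self _).trace_nonneg

lemma PosSemidef.trace_mul_eq_zero_iff {A B : Matrix n n 𝕜} (hA : A.PosSemidef)
    (hB : B.PosSemidef) : (A * B).trace = 0 ↔ A * B = 0 := by
  classical
  obtain ⟨C, rfl⟩ := CStarAlgebra.nonneg_iff_eq_star_mul_self.mp hA.nonneg
  obtain ⟨D, rfl⟩ := CStarAlgebra.nonneg_iff_eq_star_mul_self.mp hB.nonneg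
  rw [star_eq_conjTranspose, star_eq_conjTranspose,
    trace_conjTranspose_mul_self_mul_conjTranspose_mul_self,
    trace_conjTranspose_mul_self_eq_zero_iff, conjTranspose_mul_self_mul_eq_zero,
    mul_conjTranspose_mul_self_eq_zero]

variable [DecidableEq n] {A : Matrix n n 𝕜}

lemma IsHermitian.eq_sum_smul_vecMulVec_eigenvectorBasis (hA : A.IsHermitian) :
    A = ∑ i, (hA.eigenvalues i : 𝕜) •
      vecMulVec ⇑(hA.eigenvectorBasis i) (star ⇑(hA.eigenvectorBasis i)) := by
  conv_lhs => rw [hA.spectral_theorem, Unitary.conjStarAlgAut_apply]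
  ext p q
  rw [mul_apply]
  simp only [mul_diagonal, Matrix.sum_apply, smul_apply, vecMulVec_apply,
    eigenvectorUnitary_apply, star_apply, Pi.star_apply, Function.comp_apply, smul_eq_mul]
  exact Finset.sum_congr rfl fun i _ => by ring

lemma IsHermitian.star_eigenvectorBasis_dotProduct_self (hA : A.IsHermitian) (i : n) :
    star ⇑(hA.eigenvectorBasis i) ⬝ᵥ ⇑(hA.eigenvectorBasis i) = 1 := by
  rw [dotProduct_comm, ← EuclideanSpace.inner_eq_star_dotProduct, OrthonormalBasis.inner_eq_one]

lemma IsHermitian.eigenvalues_mul_self_eq {c : 𝕜} (hA : A.IsHermitian) (h : A * A = c • A)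
    (i : n) : (hA.eigenvalues i * hA.eigenvalues i : 𝕜) = c * hA.eigenvalues i := by
  have hu : ⇑(hA.eigenvectorBasis i) ≠ 0 :=
    (WithLp.ofLp_eq_zero 2).ne.2 (hA.eigenvectorBasis.orthonormal.ne_zero i)
  have h' := congrArg (· *ᵥ ⇑(hA.eigenvectorBasis i)) h
  simp only [← mulVec_mulVec, smul_mulVec, hA.mulVec_eigenvectorBasis, mulVec_smul,
    RCLike.real_smul_eq_coe_smul (K := 𝕜), smul_smul] at h'
  exact smul_left_injective 𝕜 hu h'

lemma PosSemidef.eigenvalues_le_sum (hA : A.PosSemidef) (i : n) :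
    hA.1.eigenvalues i ≤ ∑ j, hA.1.eigenvalues j :=
  Finset.single_le_sum (fun j _ => hA.eigenvalues_nonneg j) (Finset.mem_univ i)

lemma PosSemidef.trace_smul_sub_mul_self (hA : A.PosSemidef) :
    (A.trace • A - A * A).PosSemidef := by
  set T := ∑ i, hA.1.eigenvalues i
  have hcfc : cfc (fun x : ℝ => T * x - x * x) A = A.trace • A - A * A := by
    rw [cfc_sub .., cfc_const_mul .., cfc_mul .., cfc_id' ℝ A, hA.1.trace_eq_sum_eigenvalues,
      RCLike.real_smul_eq_coe_smul (K := 𝕜), RCLike.ofReal_sum]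
  rw [← nonneg_iff_posSemidef, ← hcfc]
  refine cfc_nonneg fun x hx => ?_
  rw [hA.1.spectrum_real_eq_range_eigenvalues] at hx
  obtain ⟨i, rfl⟩ := hx
  nlinarith [hA.eigenvalues_nonneg i, hA.eigenvalues_le_sum i]

lemma PosSemidef.exists_eq_trace_smul_vecMulVec (hA : A.PosSemidef) (htr : A.trace ≠ 0)
    (h : A * A = A.trace • A) :
    ∃ v : n → 𝕜, star v ⬝ᵥ v = 1 ∧ A = A.trace • vecMulVec v (star v) := by
  set ev := hA.1.eigenvalues
  have htrace : A.trace = ((∑ i, ev i : ℝ) : 𝕜) := by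
    rw [hA.1.trace_eq_sum_eigenvalues, RCLike.ofReal_sum]
  obtain ⟨i₀, hi₀⟩ : ∃ i, ev i ≠ 0 := by
    by_contra! h0
    simp [htrace, h0] at htr
  have hev₀ : ev i₀ = ∑ i, ev i := by
    have := hA.1.eigenvalues_mul_self_eq h i₀
    rw [htrace] at this
    exact_mod_cast mul_right_cancel₀ (RCLike.ofReal_ne_zero.mpr hi₀) this
  have hev : ∀ j ≠ i₀, ev j = 0 := by
    have hrest : ∑ j ∈ Finset.univ.erase i₀, ev j = 0 := by
      linarith [Finset.add_sum_erase Finset.univ ev (Finset.mem_univ i₀)]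
    intro j hj
    exact (Finset.sum_eq_zero_iff_of_nonneg fun j _ => hA.eigenvalues_nonneg j).mp hrest j
      (Finset.mem_erase.mpr ⟨hj, Finset.mem_univ j⟩)
  refine ⟨_, hA.1.star_eigenvectorBasis_dotProduct_self i₀, ?_⟩
  conv_lhs => rw [hA.1.eq_sum_smul_vecMulVec_eigenvectorBasis]
  rw [Finset.sum_eq_single i₀ (fun j _ hj => by simp [ev, hev j hj]) (by simp), htrace, ← hev₀]

end PosSemidef

end Matrix

section PartialTrace

open scoped MatrixOrder

variable {d : ℕ}

lemma trace_mul_kronecker_one (Q : Matrix (Fin d × Fin d) (Fin d × Fin d) ℂ)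
    (A : Matrix (Fin d) (Fin d) ℂ) : (Q * (A ⊗ₖ 1)).trace = (ptr2 Q * A).trace := by
  simp only [trace, diag, mul_apply, kroneckerMap_apply, one_apply, ptr2, Fintype.sum_prod_type,
    mul_ite, mul_one, mul_zero, Finset.sum_ite_eq', Finset.mem_univ, if_true, Finset.sum_mul]
  exact Finset.sum_congr rfl fun _ _ => Finset.sum_comm

lemma trace_mul_one_kronecker (Q : Matrix (Fin d × Fin d) (Fin d × Fin d) ℂ)
    (A : Matrix (Fin d) (Fin d) ℂ) : (Q * (1 ⊗ₖ A)).trace = (ptr1 Q * A).trace := by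
  simp only [trace, diag, mul_apply, kroneckerMap_apply, one_apply, ptr1, Fintype.sum_prod_type,
    mul_ite, mul_zero, ite_mul, one_mul, zero_mul, Finset.sum_ite_irrel, Finset.sum_const_zero,
    Finset.sum_ite_eq', Finset.mem_univ, if_true, Finset.sum_mul]
  rw [Finset.sum_comm]
  exact Finset.sum_congr rfl fun _ _ => Finset.sum_comm

lemma trace_ptr1 (Q : Matrix (Fin d × Fin d) (Fin d × Fin d) ℂ) : (ptr1 Q).trace = Q.trace := by
  simpa using (trace_mul_one_kronecker Q 1).symm

lemma trace_ptr2 (Q : Matrix (Fin d × Fin d) (Fin d × Fin d) ℂ) : (ptr2 Q).trace = Q.trace := by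
  simpa using (trace_mul_kronecker_one Q 1).symm

lemma ptr1_kronecker (A B : Matrix (Fin d) (Fin d) ℂ) : ptr1 (A ⊗ₖ B) = A.trace • B := by
  ext j k
  simp [ptr1, trace, Finset.sum_mul]

lemma ptr2_kronecker (A B : Matrix (Fin d) (Fin d) ℂ) : ptr2 (A ⊗ₖ B) = B.trace • A := by
  ext j k
  simp [ptr2, trace, Finset.mul_sum, mul_comm]

variable {Q : Matrix (Fin d × Fin d) (Fin d × Fin d) ℂ}

lemma isHermitian_ptr1 (hQ : Q.IsHermitian) : (ptr1 Q).IsHermitian := by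
  ext j k
  simp only [conjTranspose_apply, ptr1, star_sum]
  exact Finset.sum_congr rfl fun i _ => congrFun (congrFun hQ (i, j)) (i, k)

lemma isHermitian_ptr2 (hQ : Q.IsHermitian) : (ptr2 Q).IsHermitian := by
  ext j k
  simp only [conjTranspose_apply, ptr2, star_sum]
  exact Finset.sum_congr rfl fun i _ => congrFun (congrFun hQ (j, i)) (k, i)

lemma posSemidef_ptr1 (hQ : Q.PosSemidef) : (ptr1 Q).PosSemidef :=
  .of_dotProduct_mulVec_nonneg (isHermitian_ptr1 hQ.1) fun x => by
    rw [star_dotProduct_mulVec_eq_trace_mul_vecMulVec, ← trace_mul_one_kronecker]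
    exact hQ.trace_mul_nonneg (PosSemidef.one.kronecker (posSemidef_vecMulVec_self_star x))

lemma posSemidef_ptr2 (hQ : Q.PosSemidef) : (ptr2 Q).PosSemidef :=
  .of_dotProduct_mulVec_nonneg (isHermitian_ptr2 hQ.1) fun x => by
    rw [star_dotProduct_mulVec_eq_trace_mul_vecMulVec, ← trace_mul_kronecker_one]
    exact hQ.trace_mul_nonneg ((posSemidef_vecMulVec_self_star x).kronecker .one)

lemma ptr1_add_ptr2_smul_kronecker_self (c : ℂ) (P : Matrix (Fin d) (Fin d) ℂ) :
    ptr1 (c • (P ⊗ₖ P)) + ptr2 (c • (P ⊗ₖ P)) = (2 * c * P.trace) • P := by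
  rw [← smul_kronecker, ptr1_kronecker, ptr2_kronecker, trace_smul, smul_smul, ← add_smul,
    smul_eq_mul]
  congr 1
  ring

lemma exists_eq_smul_kronecker_of_ptr1_add_ptr2_eq (hQ : Q.PosSemidef) {v : Fin d → ℂ}
    (hv : star v ⬝ᵥ v = 1) {t : ℂ} (h : ptr1 Q + ptr2 Q = t • vecMulVec v (star v)) :
    ∃ c : ℝ, 0 ≤ c ∧ Q = (c : ℂ) • (vecMulVec v (star v) ⊗ₖ vecMulVec v (star v)) := by
  set P := vecMulVec v (star v)
  have hP := isStarProjection_vecMulVec_self_star hv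
  have hE : (1 - P).PosSemidef := hP.one_sub.nonneg.posSemidef
  have htr : (Q * (1 ⊗ₖ (1 - P))).trace + (Q * ((1 - P) ⊗ₖ 1)).trace = 0 := by
    rw [trace_mul_one_kronecker, trace_mul_kronecker_one, ← trace_add, ← Matrix.add_mul, h,
      smul_mul_assoc, hP.mul_one_sub_self, smul_zero, trace_zero]
  obtain ⟨h₁, h₂⟩ := (add_eq_zero_iff_of_nonneg (hQ.trace_mul_nonneg (PosSemidef.one.kronecker hE))
    (hQ.trace_mul_nonneg (hE.kronecker .one))).mp htr
  have hQP := eq_kronecker_mul_mul_kronecker hQ.1 hP.isSelfAdjoint hP.isSelfAdjoint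
    ((hQ.trace_mul_eq_zero_iff (hE.kronecker .one)).mp h₂)
    ((hQ.trace_mul_eq_zero_iff (PosSemidef.one.kronecker hE)).mp h₁)
  set w : Fin d × Fin d → ℂ := fun i => v i.1 * v i.2
  have hPP : P ⊗ₖ P = vecMulVec w (star w) := by
    rw [vecMulVec_kronecker_vecMulVec]
    congr 1
    ext j
    simp [w]
  rw [hPP, vecMulVec_mul_mul_vecMulVec, ← hPP] at hQP
  have hα : 0 ≤ star w ⬝ᵥ Q *ᵥ w := hQ.dotProduct_mulVec_nonneg w
  have hα_re := Complex.eq_re_of_ofReal_le hα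
  exact ⟨_, (Complex.nonneg_iff.mp hα).1, hα_re ▸ hQP⟩

end PartialTrace

theorem stmt2_general {d : ℕ} (Q : Matrix (Fin d × Fin d) (Fin d × Fin d) ℂ)
    (hQ : Q.PosSemidef) (hQ0 : Q ≠ 0) :
    ((ptr1 Q + ptr2 Q).trace • (ptr1 Q + ptr2 Q)
        - (ptr1 Q + ptr2 Q) * (ptr1 Q + ptr2 Q)).PosSemidef ∧
    ((ptr1 Q + ptr2 Q) * (ptr1 Q + ptr2 Q)
        = (ptr1 Q + ptr2 Q).trace • (ptr1 Q + ptr2 Q)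
      ↔ ∃ (c : ℝ) (ψ : Fin d → ℂ), 0 < c ∧ ψ ≠ 0 ∧
          Q = (c : ℂ) • (vecMulVec ψ (star ψ) ⊗ₖ vecMulVec ψ (star ψ))) := by
  have hM : (ptr1 Q + ptr2 Q).PosSemidef := (posSemidef_ptr1 hQ).add (posSemidef_ptr2 hQ)
  refine ⟨hM.trace_smul_sub_mul_self, fun heq => ?_, ?_⟩
  · have htr : (ptr1 Q + ptr2 Q).trace ≠ 0 := by
      rw [trace_add, trace_ptr1, trace_ptr2, ← two_mul]
      exact mul_ne_zero two_ne_zero (mt hQ.trace_eq_zero_iff.mp hQ0)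
    obtain ⟨v, hv, hMv⟩ := hM.exists_eq_trace_smul_vecMulVec htr heq
    obtain ⟨c, hc, rfl⟩ := exists_eq_smul_kronecker_of_ptr1_add_ptr2_eq hQ hv hMv
    refine ⟨c, v, hc.lt_of_ne ?_, ?_, rfl⟩
    · rintro rfl
      simp at hQ0
    · rintro rfl
      simp at hv
  · rintro ⟨c, ψ, -, -, rfl⟩
    rw [ptr1_add_ptr2_smul_kronecker_self]
    exact smul_mul_smul_self_eq_trace_smul (vecMulVec_self_star_mul_self ψ) _

/-- If `Q ≥ 0` is supported on the symmetric subspace of `ℂ^d ⊗ ℂ^d` and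
`Q̃ = tr₁ Q + tr₂ Q`, then `Q̃² ≤ tr(Q̃)·Q̃`, with equality iff `Q` is proportional to the
second tensor power of a pure state. -/
theorem stmt2 {d : ℕ} (Q : Matrix (Fin d × Fin d) (Fin d × Fin d) ℂ)
    (hQ : Q.PosSemidef) (hsupp : Pplus d * Q * Pplus d = Q) (hQ0 : Q ≠ 0) :
    ((ptr1 Q + ptr2 Q).trace • (ptr1 Q + ptr2 Q)
        - (ptr1 Q + ptr2 Q) * (ptr1 Q + ptr2 Q)).PosSemidef ∧
    ((ptr1 Q + ptr2 Q) * (ptr1 Q + ptr2 Q)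
        = (ptr1 Q + ptr2 Q).trace • (ptr1 Q + ptr2 Q)
      ↔ ∃ (c : ℝ) (ψ : Fin d → ℂ), 0 < c ∧ ψ ≠ 0 ∧
          Q = (c : ℂ) • (vecMulVec ψ (star ψ) ⊗ₖ vecMulVec ψ (star ψ))) :=
  stmt2_general Q hQ hQ0
end

section
/- Let real coefficients c_{mj} (m = 1,…,d−1; j = 0,…,d−1) satisfy Σ_j c_{mj} = 0 and Σ_j (1/λ_j) c_{m'j} c_{mj} = δ_{m'm}, where λ_j > 0 and Σ_j λ_j = 1. Then Σ_{m=1}^{d−1} c_{mj} c_{mk} = λ_j δ_{jk} − λ_j λ_k for all j, k. -/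
open BigOperators

/-- If real coefficients `c_{mj}` satisfy `Σ_j c_{mj} = 0` and
`Σ_j (1/λ_j) c_{m'j} c_{mj} = δ_{m'm}` with `λ_j > 0` summing to 1, then
`Σ_m c_{mj} c_{mk} = λ_j δ_{jk} − λ_j λ_k`. -/
theorem stmt9 {d : ℕ} (lam : Fin d → ℝ) (c : Fin (d - 1) → Fin d → ℝ)
    (hpos : ∀ j, 0 < lam j) (hsum : ∑ j, lam j = 1)
    (hzero : ∀ m, ∑ j, c m j = 0)
    (horth : ∀ m' m, ∑ j, (lam j)⁻¹ * c m' j * c m j = if m' = m then 1 else 0) :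
    ∀ j k, ∑ m, c m j * c m k = (if j = k then lam j else 0) - lam j * lam k := by
  cases d with
  | zero => exact fun j => j.elim0
  | succ n =>
    have hs : ∀ j, Real.sqrt (lam j) ≠ 0 := fun j =>
      Real.sqrt_ne_zero'.2 (hpos j)
    have hsq : ∀ j, Real.sqrt (lam j) * Real.sqrt (lam j) = lam j := fun j =>
      Real.mul_self_sqrt (hpos j).le
    set A : Matrix (Fin (n + 1)) (Fin (n + 1)) ℝ := fun i =>
      Fin.cases (fun j => Real.sqrt (lam j))
        (fun m j => c m j / Real.sqrt (lam j)) i with hA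
    have h1 : A * A.transpose = 1 := by
      ext i i'
      rw [Matrix.mul_apply]
      simp only [Matrix.transpose_apply, Matrix.one_apply]
      induction i using Fin.cases with
      | zero =>
        induction i' using Fin.cases with
        | zero => simpa [hA, hsq] using hsum
        | succ m =>
          have : ∀ j, Real.sqrt (lam j) * (c m j / Real.sqrt (lam j)) = c m j := by
            intro j
            rw [mul_comm, div_mul_cancel₀ _ (hs j)]
          simp [hA, this, hzero m, (Fin.succ_ne_zero m).symm]
      | succ m' =>
        induction i' using Fin.cases with
        | zero =>
          have : ∀ j, (c m' j / Real.sqrt (lam j)) * Real.sqrt (lam j) = c m' j := by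
            intro j
            rw [div_mul_cancel₀ _ (hs j)]
          simp [hA, this, hzero m', Fin.succ_ne_zero m']
        | succ m =>
          have : ∀ j, (c m' j / Real.sqrt (lam j)) * (c m j / Real.sqrt (lam j))
              = (lam j)⁻¹ * c m' j * c m j := by
            intro j
            rw [div_mul_div_comm, hsq j, div_eq_inv_mul, mul_assoc]
          simp only [hA, Fin.cases_succ]
          rw [Fintype.sum_congr _ _ this, horth m' m]
          simp [Fin.succ_inj]
    have h2 : A.transpose * A = 1 := mul_eq_one_comm.mp h1
    intro j k
    have h3 : (A.transpose * A) j k = (1 : Matrix (Fin (n+1)) (Fin (n+1)) ℝ) j k := by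
      rw [h2]
    rw [Matrix.mul_apply] at h3
    simp only [Matrix.transpose_apply, Matrix.one_apply] at h3
    rw [Fin.sum_univ_succ] at h3
    simp only [hA, Fin.cases_zero, Fin.cases_succ] at h3
    have h3' : Real.sqrt (lam j) * Real.sqrt (lam k)
        + ∑ m : Fin (n + 1 - 1), (c m j / Real.sqrt (lam j)) * (c m k / Real.sqrt (lam k))
        = (if j = k then 1 else 0) := h3
    have key : ∑ m, (c m j / Real.sqrt (lam j)) * (c m k / Real.sqrt (lam k))
        = (if j = k then 1 else 0) - Real.sqrt (lam j) * Real.sqrt (lam k) := by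
      linarith [h3']
    have : ∑ m, c m j * c m k
        = ((if j = k then 1 else 0) - Real.sqrt (lam j) * Real.sqrt (lam k))
          * (Real.sqrt (lam j) * Real.sqrt (lam k)) := by
      rw [← key, Finset.sum_mul]
      refine Finset.sum_congr rfl fun m _ => ?_
      rw [div_mul_div_comm, div_mul_cancel₀ _ (mul_ne_zero (hs j) (hs k))]
    rw [this]
    by_cases hjk : j = k
    · subst hjk
      rw [if_pos rfl, if_pos rfl, hsq j]
      ring
    · simp only [hjk, if_false]
      rw [zero_sub, neg_mul]
      rw [show Real.sqrt (lam j) * Real.sqrt (lam k) * (Real.sqrt (lam j) * Real.sqrt (lam k))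
          = (Real.sqrt (lam j) * Real.sqrt (lam j)) * (Real.sqrt (lam k) * Real.sqrt (lam k)) by ring,
        hsq j, hsq k]
      ring
end

section
/- Let {(w_ξ, ψ_ξ)} be a finite weighted family of unit vectors in ℂ^d with weights w_ξ ≥ 0, not all zero. Then Σ_{ξ,η} w_ξ w_η |⟨ψ_ξ|ψ_η⟩|⁴ ≥ (2/(d(d+1)))·(Σ_ξ w_ξ)², with equality if and only if Σ_ξ w_ξ (|ψ_ξ⟩⟨ψ_ξ|)^{⊗2} = (2 Σ_ξ w_ξ / (d(d+1))) P₊, i.e., the family is a weighted 2-design. -/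
/-!
Put `ρ_ξ = |ψ_ξ⟩⟨ψ_ξ|` and `M = Σ_ξ w_ξ ρ_ξ ⊗ ρ_ξ`. Then the left-hand sum is `tr(M²)`, and the
swap trick `tr(V (A ⊗ B)) = tr(A B)` gives `tr(P₊ M) = Σ_ξ w_ξ`. Since `P₊` is an orthogonal projector of
trace `d(d+1)/2`, expanding `‖M - c P₊‖²_HS ≥ 0` with `c = tr(P₊ M) / tr P₊` gives the bound, with
equality exactly when `M = c P₊`.
-/
open Matrix Kronecker ComplexOrder BigOperators

section HilbertSchmidtDistance

variable {𝕜 ι : Type*} [RCLike 𝕜] [Fintype ι] {A P : Matrix ι ι 𝕜} {t r : ℝ}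

/-- At `r = 0` this holds through the junk values `t / 0 = t ^ 2 / 0 = 0`. -/
theorem trace_conjTranspose_mul_self_sub_smul_projection (hA : A.IsHermitian)
    (hP : P.IsHermitian) (hPP : P * P = P) (hPr : P.trace = r)
    (hPA : (P * A).trace = t) :
    ((A - ((t / r : ℝ) : 𝕜) • P)ᴴ * (A - ((t / r : ℝ) : 𝕜) • P)).trace
      = (A * A).trace - ((t ^ 2 / r : ℝ) : 𝕜) := by
  simp only [conjTranspose_sub, conjTranspose_smul, RCLike.star_def, RCLike.conj_ofReal, hA.eq,
    hP.eq, sub_mul, mul_sub, mul_smul_comm, smul_mul_assoc, hPP, trace_sub, trace_smul,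
    trace_mul_comm A P, hPA, hPr, smul_eq_mul]
  push_cast
  field_simp
  ring

theorem sq_div_le_re_trace_mul_self (hA : A.IsHermitian) (hP : P.IsHermitian)
    (hPP : P * P = P) (hPr : P.trace = r) (hPA : (P * A).trace = t) :
    t ^ 2 / r ≤ RCLike.re (A * A).trace := by
  have hnonneg := (posSemidef_conjTranspose_mul_self (A - ((t / r : ℝ) : 𝕜) • P)).trace_nonneg
  rw [trace_conjTranspose_mul_self_sub_smul_projection hA hP hPP hPr hPA] at hnonneg
  have := (RCLike.nonneg_iff.mp hnonneg).1
  rwa [map_sub, RCLike.ofReal_re, sub_nonneg] at this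

theorem re_trace_mul_self_eq_sq_div_iff (hA : A.IsHermitian) (hP : P.IsHermitian)
    (hPP : P * P = P) (hPr : P.trace = r) (hPA : (P * A).trace = t) :
    RCLike.re (A * A).trace = t ^ 2 / r ↔ A = ((t / r : ℝ) : 𝕜) • P := by
  set N := A - ((t / r : ℝ) : 𝕜) • P
  have hN := trace_conjTranspose_mul_self_sub_smul_projection hA hP hPP hPr hPA
  have him : RCLike.im (Nᴴ * N).trace = 0 :=
    (RCLike.nonneg_iff.mp (posSemidef_conjTranspose_mul_self N).trace_nonneg).2
  have hre : RCLike.re (Nᴴ * N).trace = RCLike.re (A * A).trace - t ^ 2 / r := by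
    rw [hN, map_sub, RCLike.ofReal_re]
  have hre_eq_zero : RCLike.re (Nᴴ * N).trace = 0 ↔ (Nᴴ * N).trace = 0 :=
    ⟨fun h => RCLike.ext (by rw [h, map_zero]) (by rw [him, map_zero]), fun h => by rw [h, map_zero]⟩
  rw [← sub_eq_zero, ← hre, hre_eq_zero, trace_conjTranspose_mul_self_eq_zero_iff, sub_eq_zero]

end HilbertSchmidtDistance

section SymmetricProjector

variable {d : ℕ}

theorem swapOp_mul_apply {ι : Type*} (A : Matrix (Fin d × Fin d) ι ℂ) (p : Fin d × Fin d) (q : ι) :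
    (swapOp d * A) p q = A p.swap q := by
  simp only [mul_apply, swapOp, ite_and, ite_mul, one_mul, zero_mul, Fintype.sum_prod_type,
    Finset.sum_ite_eq, Finset.mem_univ, if_true]
  rfl

theorem swapOp_mul_swapOp : swapOp d * swapOp d = 1 := by
  ext p q
  rw [swapOp_mul_apply, one_apply, swapOp]
  simp [Prod.ext_iff, and_comm]

theorem isHermitian_swapOp : (swapOp d).IsHermitian := by
  ext p q
  simp [swapOp, conjTranspose_apply, and_comm, eq_comm]

theorem trace_swapOp_mul_kronecker (A B : Matrix (Fin d) (Fin d) ℂ) :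
    (swapOp d * (A ⊗ₖ B)).trace = (A * B).trace := by
  simp only [trace, diag, swapOp_mul_apply]
  simp only [kroneckerMap_apply, Fintype.sum_prod_type, mul_apply, Prod.fst_swap, Prod.snd_swap]
  exact Finset.sum_comm

theorem trace_swapOp : (swapOp d).trace = d := by
  simpa [one_kronecker_one] using trace_swapOp_mul_kronecker (1 : Matrix (Fin d) (Fin d) ℂ) 1

theorem isHermitian_Pplus : (Pplus d).IsHermitian := by
  simp [Pplus, IsHermitian, conjTranspose_smul, isHermitian_swapOp.eq]

theorem Pplus_mul_self : Pplus d * Pplus d = Pplus d := by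
  simp only [Pplus, smul_mul_smul, add_mul, mul_add, one_mul, mul_one, swapOp_mul_swapOp]
  module

theorem trace_Pplus : (Pplus d).trace = (d * (d + 1) / 2 : ℝ) := by
  simp only [Pplus, trace_smul, trace_add, trace_one, trace_swapOp, Fintype.card_prod,
    Fintype.card_fin, smul_eq_mul]
  push_cast
  ring

theorem trace_Pplus_mul_kronecker (A B : Matrix (Fin d) (Fin d) ℂ) :
    (Pplus d * (A ⊗ₖ B)).trace = 2⁻¹ * (A.trace * B.trace + (A * B).trace) := by
  simp [Pplus, add_mul, trace_add, trace_swapOp_mul_kronecker, trace_kronecker, mul_add]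

end SymmetricProjector

theorem trace_vecMulVec_star_mul_vecMulVec_star {ι : Type*} [Fintype ι] (a b : ι → ℂ) :
    (vecMulVec a (star a) * vecMulVec b (star b)).trace = ((‖star a ⬝ᵥ b‖ ^ 2 : ℝ) : ℂ) := by
  rw [vecMulVec_mul_vecMulVec, trace_vecMulVec, dotProduct_smul, smul_eq_mul,
    dotProduct_comm a, star_dotProduct b a]
  push_cast
  exact Complex.mul_conj' _

section TensorSquareFrameOp

variable {ι : Type*} [Fintype ι] {d : ℕ}

noncomputable def tensorSquareFrameOp (ψ : ι → Fin d → ℂ) (w : ι → ℝ) :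
    Matrix (Fin d × Fin d) (Fin d × Fin d) ℂ :=
  ∑ ξ, (w ξ : ℂ) • (vecMulVec (ψ ξ) (star (ψ ξ)) ⊗ₖ vecMulVec (ψ ξ) (star (ψ ξ)))

theorem isHermitian_tensorSquareFrameOp (ψ : ι → Fin d → ℂ) (w : ι → ℝ) :
    (tensorSquareFrameOp ψ w).IsHermitian := by
  simp [tensorSquareFrameOp, IsHermitian, conjTranspose_sum, conjTranspose_smul,
    conjTranspose_kronecker, conjTranspose_vecMulVec]

theorem trace_tensorSquareFrameOp_mul_self (ψ : ι → Fin d → ℂ) (w : ι → ℝ) :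
    (tensorSquareFrameOp ψ w * tensorSquareFrameOp ψ w).trace
      = ((∑ ξ, ∑ η, w ξ * w η * ‖star (ψ ξ) ⬝ᵥ ψ η‖ ^ 4 : ℝ) : ℂ) := by
  simp only [tensorSquareFrameOp, Finset.sum_mul_sum, smul_mul_smul, ← mul_kronecker_mul,
    trace_sum, trace_smul, trace_kronecker, trace_vecMulVec_star_mul_vecMulVec_star]
  push_cast
  exact Finset.sum_congr rfl fun ξ _ => Finset.sum_congr rfl fun η _ => by ring

theorem trace_Pplus_mul_tensorSquareFrameOp {ψ : ι → Fin d → ℂ} (w : ι → ℝ)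
    (hunit : ∀ ξ, star (ψ ξ) ⬝ᵥ ψ ξ = 1) :
    (Pplus d * tensorSquareFrameOp ψ w).trace = ((∑ ξ, w ξ : ℝ) : ℂ) := by
  have hPρ : ∀ ξ,
      (Pplus d * (vecMulVec (ψ ξ) (star (ψ ξ)) ⊗ₖ vecMulVec (ψ ξ) (star (ψ ξ)))).trace = 1 := by
    intro ξ
    rw [trace_Pplus_mul_kronecker, trace_vecMulVec_star_mul_vecMulVec_star, trace_vecMulVec,
      dotProduct_comm, hunit]
    norm_num
  simp only [tensorSquareFrameOp, Finset.mul_sum, mul_smul_comm, trace_sum, trace_smul, hPρ,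
    smul_eq_mul, mul_one]
  exact (Complex.ofReal_sum _ _).symm

end TensorSquareFrameOp

theorem stmt10_general {d n : ℕ} (ψ : Fin n → Fin d → ℂ) (w : Fin n → ℝ)
    (hunit : ∀ ξ, star (ψ ξ) ⬝ᵥ ψ ξ = 1) :
    (2 / (d * (d + 1)) : ℝ) * (∑ ξ, w ξ) ^ 2
      ≤ ∑ ξ, ∑ η, w ξ * w η * ‖star (ψ ξ) ⬝ᵥ ψ η‖ ^ 4 ∧
    (∑ ξ, ∑ η, w ξ * w η * ‖star (ψ ξ) ⬝ᵥ ψ η‖ ^ 4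
        = (2 / (d * (d + 1)) : ℝ) * (∑ ξ, w ξ) ^ 2
      ↔ ∑ ξ, (w ξ : ℂ) • (vecMulVec (ψ ξ) (star (ψ ξ)) ⊗ₖ vecMulVec (ψ ξ) (star (ψ ξ)))
          = (((2 * ∑ ξ, w ξ) / (d * (d + 1)) : ℝ) : ℂ) • Pplus d) := by
  have hM := isHermitian_tensorSquareFrameOp ψ w
  have hPM := trace_Pplus_mul_tensorSquareFrameOp w hunit
  have hle := sq_div_le_re_trace_mul_self (t := ∑ ξ, w ξ) (r := d * (d + 1) / 2) hM
    isHermitian_Pplus Pplus_mul_self trace_Pplus hPM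
  have hiff := re_trace_mul_self_eq_sq_div_iff (t := ∑ ξ, w ξ) (r := d * (d + 1) / 2) hM
    isHermitian_Pplus Pplus_mul_self trace_Pplus hPM
  have hsq : (∑ ξ, w ξ) ^ 2 / (d * (d + 1) / 2) = 2 / (d * (d + 1)) * (∑ ξ, w ξ) ^ 2 := by
    rw [div_div_eq_mul_div]; ring
  have hscalar : (∑ ξ, w ξ) / (d * (d + 1) / 2) = (2 * ∑ ξ, w ξ) / (d * (d + 1)) := by
    rw [div_div_eq_mul_div, mul_comm]
  rw [trace_tensorSquareFrameOp_mul_self, RCLike.re_to_complex, Complex.ofReal_re, hsq] at hle hiff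
  rw [hscalar] at hiff
  exact ⟨hle, hiff⟩

/-- For a finite weighted family of unit vectors in `ℂ^d` with nonnegative
weights, not all zero, `Σ_{ξ,η} w_ξ w_η |⟨ψ_ξ|ψ_η⟩|⁴ ≥ (2/(d(d+1)))(Σ_ξ w_ξ)²`, with equality
iff the family is a weighted 2-design. -/
theorem stmt10 {d n : ℕ} (hd : 0 < d) (ψ : Fin n → Fin d → ℂ) (w : Fin n → ℝ)
    (hw : ∀ ξ, 0 ≤ w ξ) (hne : ∃ ξ, w ξ ≠ 0)
    (hunit : ∀ ξ, star (ψ ξ) ⬝ᵥ ψ ξ = 1) :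
    (2 / (d * (d + 1)) : ℝ) * (∑ ξ, w ξ) ^ 2
      ≤ ∑ ξ, ∑ η, w ξ * w η * ‖star (ψ ξ) ⬝ᵥ ψ η‖ ^ 4 ∧
    (∑ ξ, ∑ η, w ξ * w η * ‖star (ψ ξ) ⬝ᵥ ψ η‖ ^ 4
        = (2 / (d * (d + 1)) : ℝ) * (∑ ξ, w ξ) ^ 2
      ↔ ∑ ξ, (w ξ : ℂ) • (vecMulVec (ψ ξ) (star (ψ ξ)) ⊗ₖ vecMulVec (ψ ξ) (star (ψ ξ)))
          = (((2 * ∑ ξ, w ξ) / (d * (d + 1)) : ℝ) : ℂ) • Pplus d) :=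
  stmt10_general ψ w hunit
end
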